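/- arXiv:cs/0310004 — 2 statements merged into one kernel-verified Lean document; each statement's English description precedes it below -/
import Mathlib

section
/- There exists a constant C > 0 such that for all sufficiently large N, the number of distinct (labeled-free, i.e. up to isomorphism) strongly connected directed graphs on N vertices with in- and out-degree bounded by a fixed constant δ ≥ 3 and diameter at most 2·log₂(N) + 1 is at least N^(C·N). -/
open Filter

/-- `within G n u v`: there is a directed walk from `u` to `v` of length at most `n`. -/
def within {V : Type*} (G : V → V → Prop) : ℕ → V → V → Prop
  | 0, u, v => u = v
  | n + 1, u, v => u = v ∨ ∃ w, G u w ∧ within G n w v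

/-- Two directed graphs on `Fin N` are isomorphic. -/
def isoRel (N : ℕ) (G H : Fin N → Fin N → Prop) : Prop :=
  ∃ e : Equiv (Fin N) (Fin N), ∀ u v, G u v ↔ H (e u) (e v)

namespace S0

/-! ### within basics -/

theorem within_refl {V : Type*} (G : V → V → Prop) : ∀ n u, within G n u u
  | 0, _ => rfl
  | _ + 1, _ => Or.inl rfl

theorem within_mono {V : Type*} (G : V → V → Prop) :
    ∀ {n n' : ℕ} {u v : V}, n ≤ n' → within G n u v → within G n' u v := by
  intro n
  induction n with
  | zero => intro n' u v _ h; cases h; exact within_refl G _ _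
  | succ n ih =>
    intro n' u v hle h
    obtain ⟨n'', rfl⟩ : ∃ k, n' = k + 1 := ⟨n' - 1, by omega⟩
    rcases h with h | ⟨w, hw, h⟩
    · exact Or.inl h
    · exact Or.inr ⟨w, hw, ih (by omega) h⟩

theorem within_trans {V : Type*} (G : V → V → Prop) :
    ∀ {a b : ℕ} {u w v : V}, within G a u w → within G b w v → within G (a + b) u v := by
  intro a
  induction a with
  | zero => intro b u w v h h'; cases h; simpa using h'
  | succ a ih =>
    intro b u w v h h'
    rcases h with h | ⟨x, hx, h⟩
    · subst h; exact within_mono G (by omega) h'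
    · show within G (a + 1 + b) u v
      have : a + 1 + b = (a + b) + 1 := by omega
      rw [this]
      exact Or.inr ⟨x, hx, ih h h'⟩

theorem rtg_of_within {V : Type*} (G : V → V → Prop) :
    ∀ {n : ℕ} {u v : V}, within G n u v → Relation.ReflTransGen G u v := by
  intro n
  induction n with
  | zero => intro u v h; cases h; rfl
  | succ n ih =>
    intro u v h
    rcases h with h | ⟨w, hw, h⟩
    · cases h; rfl
    · exact Relation.ReflTransGen.head hw (ih h)

/-! ### The construction -/

variable (N : ℕ)

/-- label of a vertex, in `[1, N]`. -/
def lab {N : ℕ} (v : Fin N) : ℕ := v.1 + 1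

theorem lab_pos {N : ℕ} (v : Fin N) : 1 ≤ lab v := Nat.le_add_left _ _

theorem lab_le {N : ℕ} (v : Fin N) : lab v ≤ N := v.2

theorem lab_inj {N : ℕ} {u v : Fin N} (h : lab u = lab v) : u = v :=
  Fin.ext (by simpa [lab] using h)

/-- vertex with a given label. -/
def toV (hN : 0 < N) (c : ℕ) : Fin N := ⟨(c - 1) % N, Nat.mod_lt _ hN⟩

theorem lab_toV (hN : 0 < N) {c : ℕ} (h1 : 1 ≤ c) (h2 : c ≤ N) : lab (toV N hN c) = c := by
  simp only [lab, toV]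
  rw [Nat.mod_eq_of_lt (by omega)]
  omega

theorem toV_lab (hN : 0 < N) (v : Fin N) : toV N hN (lab v) = v := by
  apply lab_inj; rw [lab_toV N hN (lab_pos v) (lab_le v)]

/-- the permutation-matching target: for `n` in the `A`-block, its partner in the `B`-block. -/
def F (π : Equiv.Perm (Fin (N / 8))) (n : ℕ) : ℕ :=
  N - N / 8 + 1 +
    if h : (n - (N / 2 + 2)) % (N / 8) < N / 8 then (π ⟨_, h⟩).1 else 0

/-- the A block: labels `[N/2+2, N/2+1+N/8]` (all leaves). -/
def Ablk (n : ℕ) : Prop := N / 2 + 2 ≤ n ∧ n ≤ N / 2 + 1 + N / 8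

theorem F_mem (π : Equiv.Perm (Fin (N / 8))) (hK : 0 < N / 8) (n : ℕ) :
    N - N / 8 + 1 ≤ F N π n ∧ F N π n ≤ N := by
  unfold F
  split
  · next h => have := (π ⟨_, h⟩).2; omega
  · omega

/-- The edge relation on labels. -/
def E (π : Equiv.Perm (Fin (N / 8))) (n n' : ℕ) : Prop :=
  (2 ≤ n ∧ n' = n / 2) ∨
  (2 ≤ n' ∧ n = n' / 2) ∨
  (N < 2 * n ∧ n' = n + 1 ∧ n + 1 ≤ N) ∨
  (Ablk N n ∧ n' = F N π n)

/-- The graph. -/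
def Rel (π : Equiv.Perm (Fin (N / 8))) : Fin N → Fin N → Prop :=
  fun u v => E N π (lab u) (lab v)

end S0

namespace S0

variable (N : ℕ)

theorem ncard_triple_le {α : Type*} (a b c : α) : ({a, b, c} : Set α).ncard ≤ 3 := by
  have h1 := Set.ncard_insert_le a ({b, c} : Set α)
  have h2 := Set.ncard_insert_le b ({c} : Set α)
  have h3 : ({c} : Set α).ncard = 1 := Set.ncard_singleton c
  omega

section Paths

variable (hN : 0 < N) (π : Equiv.Perm (Fin (N / 8)))

theorem within_up : ∀ v : Fin N, within (Rel N π) (Nat.log 2 (lab v)) v (toV N hN 1) := by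
  suffices h : ∀ n : ℕ, ∀ v : Fin N, lab v = n →
      within (Rel N π) (Nat.log 2 n) v (toV N hN 1) by
    intro v; exact h _ v rfl
  intro n
  induction n using Nat.strong_induction_on with
  | _ n ih =>
    intro v hv
    rcases Nat.lt_or_ge n 2 with h2 | h2
    · have hn1 : n = 1 := by have := lab_pos v; omega
      subst hn1
      have : v = toV N hN 1 := by
        apply lab_inj; rw [hv, lab_toV N hN (by omega) (by have := lab_pos v; omega)]
      rw [Nat.log_one_right]
      exact this
    · have hn2 : 2 ≤ n := h2
      have hnN : n ≤ N := hv ▸ lab_le v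
      have hlog : Nat.log 2 n = Nat.log 2 (n / 2) + 1 := by
        have h1 := Nat.log_div_base 2 n
        have hp := Nat.log_pos (b := 2) (by norm_num) hn2
        omega
      rw [hlog]
      refine Or.inr ⟨toV N hN (n / 2), ?_, ?_⟩
      · exact Or.inl ⟨hv ▸ hn2, by rw [lab_toV N hN (by omega) (by omega), hv]⟩
      · exact ih (n / 2) (by omega) _ (lab_toV N hN (by omega) (by omega))

theorem within_down : ∀ v : Fin N, within (Rel N π) (Nat.log 2 (lab v)) (toV N hN 1) v := by
  suffices h : ∀ n : ℕ, ∀ v : Fin N, lab v = n →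
      within (Rel N π) (Nat.log 2 n) (toV N hN 1) v by
    intro v; exact h _ v rfl
  intro n
  induction n using Nat.strong_induction_on with
  | _ n ih =>
    intro v hv
    rcases Nat.lt_or_ge n 2 with h2 | h2
    · have hn1 : n = 1 := by have := lab_pos v; omega
      subst hn1
      have : v = toV N hN 1 := by
        apply lab_inj; rw [hv, lab_toV N hN (by omega) (by have := lab_pos v; omega)]
      rw [Nat.log_one_right]
      exact this.symm
    · have hnN : n ≤ N := hv ▸ lab_le v
      have hlog : Nat.log 2 n = Nat.log 2 (n / 2) + 1 := by
        have h1 := Nat.log_div_base 2 n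
        have hp := Nat.log_pos (b := 2) (by norm_num) h2
        omega
      rw [hlog]
      have step : within (Rel N π) 1 (toV N hN (n / 2)) v :=
        Or.inr ⟨v, Or.inr (Or.inl ⟨hv ▸ h2, by rw [lab_toV N hN (by omega) (by omega), hv]⟩),
          rfl⟩
      have := within_trans (Rel N π)
        (ih (n / 2) (by omega) _ (lab_toV N hN (by omega) (by omega))) step
      exact this

theorem diam (hN : 0 < N) (π : Equiv.Perm (Fin (N / 8))) (u v : Fin N) :
    within (Rel N π) (2 * Nat.log 2 N + 1) u v := by
  have h1 := within_up N hN π u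
  have h2 := within_down N hN π v
  have h := within_trans (Rel N π) h1 h2
  refine within_mono (Rel N π) ?_ h
  have b1 : Nat.log 2 (lab u) ≤ Nat.log 2 N := Nat.log_mono_right (lab_le u)
  have b2 : Nat.log 2 (lab v) ≤ Nat.log 2 N := Nat.log_mono_right (lab_le v)
  omega

theorem conn (hN : 0 < N) (π : Equiv.Perm (Fin (N / 8))) (u v : Fin N) :
    Relation.ReflTransGen (Rel N π) u v :=
  rtg_of_within _ (diam N hN π u v)

end Paths

/-- inverse matching map -/
def Finv (π : Equiv.Perm (Fin (N / 8))) (n : ℕ) : ℕ :=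
  N / 2 + 2 +
    if h : (n - (N - N / 8 + 1)) % (N / 8) < N / 8 then (π.symm ⟨_, h⟩).1 else 0

theorem F_eq (π : Equiv.Perm (Fin (N / 8))) (hK : 0 < N / 8) {n : ℕ} (i : Fin (N / 8))
    (hi : n - (N / 2 + 2) = i.1) : F N π n = N - N / 8 + 1 + (π i).1 := by
  unfold F
  rw [dif_pos (Nat.mod_lt _ hK)]
  have h : (⟨(n - (N / 2 + 2)) % (N / 8), Nat.mod_lt _ hK⟩ : Fin (N / 8)) = i := by
    apply Fin.ext
    show (n - (N / 2 + 2)) % (N / 8) = i.1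
    rw [hi, Nat.mod_eq_of_lt i.2]
  rw [h]

theorem Finv_eq (π : Equiv.Perm (Fin (N / 8))) (hK : 0 < N / 8) {n : ℕ} (j : Fin (N / 8))
    (hj : n - (N - N / 8 + 1) = j.1) : Finv N π n = N / 2 + 2 + (π.symm j).1 := by
  unfold Finv
  rw [dif_pos (Nat.mod_lt _ hK)]
  have h : (⟨(n - (N - N / 8 + 1)) % (N / 8), Nat.mod_lt _ hK⟩ : Fin (N / 8)) = j := by
    apply Fin.ext
    show (n - (N - N / 8 + 1)) % (N / 8) = j.1
    rw [hj, Nat.mod_eq_of_lt j.2]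
  rw [h]

theorem Finv_F (π : Equiv.Perm (Fin (N / 8))) (hN : 16 ≤ N) {n : ℕ} (hA : Ablk N n) :
    Finv N π (F N π n) = n := by
  obtain ⟨h1, h2⟩ := hA
  have hK : 0 < N / 8 := by omega
  have hi : n - (N / 2 + 2) < N / 8 := by omega
  set i : Fin (N / 8) := ⟨n - (N / 2 + 2), hi⟩ with hidef
  rw [F_eq N π hK i rfl, Finv_eq N π hK (π i) (by omega), Equiv.symm_apply_apply]
  show N / 2 + 2 + (n - (N / 2 + 2)) = n
  omega

section Deg

variable (π : Equiv.Perm (Fin (N / 8)))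

theorem outdeg (hN : 16 ≤ N) (π : Equiv.Perm (Fin (N / 8))) (v : Fin N) :
    {w | Rel N π v w}.ncard ≤ 3 := by
  have hN0 : 0 < N := by omega
  have hF := F_mem N π (by omega) (lab v)
  obtain ⟨n, hn⟩ : ∃ n, lab v = n := ⟨_, rfl⟩
  rw [hn] at hF
  have hsub : {w | Rel N π v w} ⊆
      ({toV N hN0 (n / 2), toV N hN0 (if N < 2 * n then n + 1 else 2 * n),
        toV N hN0 (if N < 2 * n then F N π n else 2 * n + 1)} : Set (Fin N)) := by
    intro w hw
    have hw1 : 1 ≤ lab w := lab_pos w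
    have hwN : lab w ≤ N := lab_le w
    have hv1 : 1 ≤ n := hn ▸ lab_pos v
    have hvN : n ≤ N := hn ▸ lab_le v
    have hw' : E N π n (lab w) := by rw [← hn]; exact hw
    rcases hw' with ⟨h2, he⟩ | ⟨h2, he⟩ | ⟨hl, he, heN⟩ | ⟨hA, he⟩
    · left; apply lab_inj; rw [he, lab_toV N hN0 (by omega) (by omega)]
    · -- down : lab w ∈ {2n, 2n+1}, in particular 2n ≤ N
      have hw2 : lab w = 2 * n ∨ lab w = 2 * n + 1 := by omega
      have hint : ¬ (N < 2 * n) := by omega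
      rcases hw2 with hw2 | hw2
      · right; left; apply lab_inj; rw [hw2, if_neg hint, lab_toV N hN0 (by omega) (by omega)]
      · right; right; apply lab_inj; rw [hw2, if_neg hint, lab_toV N hN0 (by omega) (by omega)]
    · right; left; apply lab_inj; rw [he, if_pos hl, lab_toV N hN0 (by omega) (by omega)]
    · have hl : N < 2 * n := by obtain ⟨ha1, ha2⟩ := hA; omega
      right; right; apply lab_inj
      rw [he, if_pos hl, lab_toV N hN0 (by omega) (by omega)]
  calc {w | Rel N π v w}.ncard ≤ _ := Set.ncard_le_ncard hsub (Set.toFinite _)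
    _ ≤ 3 := ncard_triple_le _ _ _

theorem indeg (hN : 16 ≤ N) (π : Equiv.Perm (Fin (N / 8))) (v : Fin N) :
    {u | Rel N π u v}.ncard ≤ 3 := by
  have hN0 : 0 < N := by omega
  obtain ⟨n, hn⟩ : ∃ n, lab v = n := ⟨_, rfl⟩
  have hsub : {u | Rel N π u v} ⊆
      ({toV N hN0 (n / 2), toV N hN0 (if N < 2 * n then n - 1 else 2 * n),
        toV N hN0 (if N < 2 * n then Finv N π n else 2 * n + 1)} : Set (Fin N)) := by
    intro u hu
    have hu1 : 1 ≤ lab u := lab_pos u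
    have huN : lab u ≤ N := lab_le u
    have hv1 : 1 ≤ n := hn ▸ lab_pos v
    have hvN : n ≤ N := hn ▸ lab_le v
    have hF := F_mem N π (by omega) (lab u)
    have hu' : E N π (lab u) n := by rw [← hn]; exact hu
    rcases hu' with ⟨h2, he⟩ | ⟨h2, he⟩ | ⟨hl, he, heN⟩ | ⟨hA, he⟩
    · -- up into v : lab u ∈ {2n, 2n+1}
      have hu2 : lab u = 2 * n ∨ lab u = 2 * n + 1 := by omega
      have hint : ¬ (N < 2 * n) := by omega
      rcases hu2 with hu2 | hu2
      · right; left; apply lab_inj; rw [hu2, if_neg hint, lab_toV N hN0 (by omega) (by omega)]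
      · right; right; apply lab_inj; rw [hu2, if_neg hint, lab_toV N hN0 (by omega) (by omega)]
    · left; apply lab_inj; rw [he, lab_toV N hN0 (by omega) (by omega)]
    · -- path into v : u = n - 1, and v is a leaf
      have hl2 : N < 2 * n := by omega
      right; left; apply lab_inj
      rw [if_pos hl2, lab_toV N hN0 (by omega) (by omega)]; omega
    · -- matching edge into v
      have hl2 : N < 2 * n := by omega
      have hFi : Finv N π n = lab u := by rw [he]; exact Finv_F N π hN hA
      right; right; apply lab_inj
      rw [if_pos hl2, lab_toV N hN0 (by omega) (by omega), hFi]
  calc {u | Rel N π u v}.ncard ≤ _ := Set.ncard_le_ncard hsub (Set.toFinite _)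
    _ ≤ 3 := ncard_triple_le _ _ _

end Deg

end S0

namespace S0

variable (N : ℕ)

/-- tree (antiparallel) relation on labels -/
def Tr (a b : ℕ) : Prop := (2 ≤ a ∧ b = a / 2) ∨ (2 ≤ b ∧ a = b / 2)

theorem AP_iff (hN : 64 ≤ N) (ρ : Equiv.Perm (Fin (N / 8))) (u v : Fin N) :
    (Rel N ρ u v ∧ Rel N ρ v u) ↔ Tr (lab u) (lab v) := by
  have hu1 : 1 ≤ lab u := lab_pos u
  have huN : lab u ≤ N := lab_le u
  have hv1 : 1 ≤ lab v := lab_pos v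
  have hvN : lab v ≤ N := lab_le v
  have hFu := F_mem N ρ (by omega) (lab u)
  have hFv := F_mem N ρ (by omega) (lab v)
  constructor
  · rintro ⟨h1, h2⟩
    rcases h1 with h1 | h1 | ⟨hl, he, heN⟩ | ⟨hA, he⟩
    · exact Or.inl h1
    · exact Or.inr h1
    · -- u→v is a path edge; derive a contradiction from v→u
      exfalso
      rcases h2 with ⟨g2, ge⟩ | ⟨g2, ge⟩ | ⟨gl, ge, geN⟩ | ⟨gA, ge⟩
      · omega
      · omega
      · omega
      · obtain ⟨gA1, gA2⟩ := gA; omega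
    · exfalso
      obtain ⟨hA1, hA2⟩ := hA
      rcases h2 with ⟨g2, ge⟩ | ⟨g2, ge⟩ | ⟨gl, ge, geN⟩ | ⟨gA, ge⟩
      · omega
      · omega
      · omega
      · obtain ⟨gA1, gA2⟩ := gA; omega
  · rintro (⟨h2, he⟩ | ⟨h2, he⟩)
    · exact ⟨Or.inl ⟨h2, he⟩, Or.inr (Or.inl ⟨h2, he⟩)⟩
    · exact ⟨Or.inr (Or.inl ⟨h2, he⟩), Or.inl ⟨h2, he⟩⟩

theorem leaf_exu (hN : 64 ≤ N) (ρ : Equiv.Perm (Fin (N / 8))) (v : Fin N) :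
    (∃! w, Rel N ρ v w ∧ Rel N ρ w v) ↔ N < 2 * lab v := by
  have hN0 : 0 < N := by omega
  have hv1 : 1 ≤ lab v := lab_pos v
  have hvN : lab v ≤ N := lab_le v
  constructor
  · rintro ⟨w, hw, hu⟩
    by_contra hle
    -- v is internal; exhibit two distinct AP-partners
    have two : ∃ y1 y2 : Fin N, y1 ≠ y2 ∧ Tr (lab v) (lab y1) ∧ Tr (lab v) (lab y2) := by
      rcases Nat.lt_or_ge (lab v) 2 with h1 | h1
      · refine ⟨toV N hN0 2, toV N hN0 3, ?_, ?_, ?_⟩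
        · intro h
          have := congrArg lab h
          rw [lab_toV N hN0 (by omega) (by omega), lab_toV N hN0 (by omega) (by omega)] at this
          omega
        · right; rw [lab_toV N hN0 (by omega) (by omega)]; omega
        · right; rw [lab_toV N hN0 (by omega) (by omega)]; omega
      · refine ⟨toV N hN0 (lab v / 2), toV N hN0 (2 * lab v), ?_, ?_, ?_⟩
        · intro h
          have := congrArg lab h
          rw [lab_toV N hN0 (by omega) (by omega), lab_toV N hN0 (by omega) (by omega)] at this
          omega
        · left; rw [lab_toV N hN0 (by omega) (by omega)]; omega
        · right; rw [lab_toV N hN0 (by omega) (by omega)]; omega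
    obtain ⟨y1, y2, hne, t1, t2⟩ := two
    have e1 : y1 = w := hu y1 ((AP_iff N hN ρ v y1).2 t1)
    have e2 : y2 = w := hu y2 ((AP_iff N hN ρ v y2).2 t2)
    exact hne (e1.trans e2.symm)
  · intro hl
    have h2 : 2 ≤ lab v := by omega
    refine ⟨toV N hN0 (lab v / 2), (AP_iff N hN ρ v _).2 ?_, ?_⟩
    · left; rw [lab_toV N hN0 (by omega) (by omega)]; omega
    · intro y hy
      have hy' := (AP_iff N hN ρ v y).1 hy
      have hyN : lab y ≤ N := lab_le y
      rcases hy' with ⟨g2, ge⟩ | ⟨g2, ge⟩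
      · apply lab_inj; rw [ge, lab_toV N hN0 (by omega) (by omega)]
      · omega

theorem exu_transfer {α β : Type*} (e : α ≃ β) {R : α → α → Prop} {R' : β → β → Prop}
    (h : ∀ a b, R a b ↔ R' (e a) (e b)) (v : α) : (∃! w, R v w) ↔ (∃! w, R' (e v) w) := by
  constructor
  · rintro ⟨w, hw, hu⟩
    refine ⟨e w, (h v w).1 hw, ?_⟩
    intro y hy
    have : e.symm y = w := hu _ ((h v (e.symm y)).2 (by simpa using hy))
    rw [← this, Equiv.apply_symm_apply]
  · rintro ⟨w, hw, hu⟩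
    refine ⟨e.symm w, (h v (e.symm w)).2 (by simpa using hw), ?_⟩
    intro y hy
    have : e y = w := hu _ ((h v y).1 hy)
    rw [← this, Equiv.symm_apply_apply]

/-- at least two in-edges from leaves -/
def TL (ρ : Equiv.Perm (Fin (N / 8))) (w : Fin N) : Prop :=
  ∃ u1 u2 : Fin N, u1 ≠ u2 ∧ N < 2 * lab u1 ∧ N < 2 * lab u2 ∧
    Rel N ρ u1 w ∧ Rel N ρ u2 w

theorem noTL (hN : 64 ≤ N) (ρ : Equiv.Perm (Fin (N / 8))) (x : Fin N)
    (hxl : N < 2 * lab x) (hx : lab x ≤ N - N / 8) : ¬ TL N ρ x := by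
  rintro ⟨u1, u2, hne, hl1, hl2, he1, he2⟩
  have key : ∀ u : Fin N, N < 2 * lab u → Rel N ρ u x → lab u = lab x - 1 := by
    intro u hu he
    have hu1 : 1 ≤ lab u := lab_pos u
    have huN : lab u ≤ N := lab_le u
    have hxN : lab x ≤ N := lab_le x
    have hF := F_mem N ρ (by omega) (lab u)
    rcases he with ⟨g2, ge⟩ | ⟨g2, ge⟩ | ⟨gl, ge, geN⟩ | ⟨gA, ge⟩
    · omega
    · omega
    · omega
    · omega
  have k1 := key u1 hl1 he1
  have k2 := key u2 hl2 he2
  exact hne (lab_inj (k1.trans k2.symm))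

theorem anchor_char (hN : 64 ≤ N) (ρ : Equiv.Perm (Fin (N / 8))) (v : Fin N)
    (hv : N < 2 * lab v) (hno : ∀ u : Fin N, N < 2 * lab u → ¬ Rel N ρ u v) :
    lab v = N / 2 + 1 := by
  have hN0 : 0 < N := by omega
  have hvN : lab v ≤ N := lab_le v
  by_contra h
  have hge : N / 2 + 2 ≤ lab v := by omega
  apply hno (toV N hN0 (lab v - 1))
  · rw [lab_toV N hN0 (by omega) (by omega)]; omega
  · exact Or.inr (Or.inr (Or.inl
      ⟨by rw [lab_toV N hN0 (by omega) (by omega)]; omega,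
       by rw [lab_toV N hN0 (by omega) (by omega)]; omega,
       by rw [lab_toV N hN0 (by omega) (by omega)]; omega⟩))

theorem succ_u (hN : 64 ≤ N) (ρ : Equiv.Perm (Fin (N / 8))) (l w : Fin N)
    (hl : N < 2 * lab l) (hlN : lab l + 1 ≤ N) (hw : Rel N ρ l w)
    (hwl : N < 2 * lab w) (h2 : Ablk N (lab l) → ¬ TL N ρ w) : lab w = lab l + 1 := by
  have hN0 : 0 < N := by omega
  have hl1 : 1 ≤ lab l := lab_pos l
  have hlNN : lab l ≤ N := lab_le l
  have hwN : lab w ≤ N := lab_le w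
  rcases hw with ⟨g2, ge⟩ | ⟨g2, ge⟩ | ⟨gl, ge, geN⟩ | ⟨gA, ge⟩
  · omega
  · omega
  · omega
  · exfalso
    apply h2 gA
    have hF := F_mem N ρ (by omega) (lab l)
    obtain ⟨gA1, gA2⟩ := gA
    refine ⟨toV N hN0 (F N ρ (lab l) - 1), l, ?_, ?_, hl, ?_,
      Or.inr (Or.inr (Or.inr ⟨⟨gA1, gA2⟩, ge⟩))⟩
    · intro h
      have := congrArg lab h
      rw [lab_toV N hN0 (by omega) (by omega)] at this
      omega
    · rw [lab_toV N hN0 (by omega) (by omega)]; omega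
    · exact Or.inr (Or.inr (Or.inl
        ⟨by rw [lab_toV N hN0 (by omega) (by omega)]; omega,
         by rw [ge, lab_toV N hN0 (by omega) (by omega)]; omega,
         by rw [lab_toV N hN0 (by omega) (by omega)]; omega⟩))

theorem rigid (hN : 65536 ≤ N) (π π' : Equiv.Perm (Fin (N / 8))) (e : Fin N ≃ Fin N)
    (hiso : ∀ u v, Rel N π u v ↔ Rel N π' (e u) (e v)) : ∀ v, e v = v := by
  have hN0 : 0 < N := by omega
  have hN64 : 64 ≤ N := by omega
  -- leafness is preserved by e
  have hleaf : ∀ v : Fin N, (N < 2 * lab (e v)) ↔ (N < 2 * lab v) := by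
    intro v
    rw [← leaf_exu N hN64 π' (e v), ← leaf_exu N hN64 π v]
    exact (exu_transfer e (R := fun a b => Rel N π a b ∧ Rel N π b a)
      (R' := fun a b => Rel N π' a b ∧ Rel N π' b a)
      (fun a b => (hiso a b).and (hiso b a)) v).symm
  -- TL is reflected by e
  have hTL : ∀ w : Fin N, ¬ TL N π w → ¬ TL N π' (e w) := by
    intro w hn
    rintro ⟨u1, u2, hne, h1, h2, e1, e2⟩
    apply hn
    refine ⟨e.symm u1, e.symm u2, fun h => hne (by
      have := congrArg e h
      rwa [Equiv.apply_symm_apply, Equiv.apply_symm_apply] at this), ?_, ?_, ?_, ?_⟩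
    · have := hleaf (e.symm u1); rw [Equiv.apply_symm_apply] at this; exact this.1 h1
    · have := hleaf (e.symm u2); rw [Equiv.apply_symm_apply] at this; exact this.1 h2
    · exact (hiso _ w).2 (by rwa [Equiv.apply_symm_apply])
    · exact (hiso _ w).2 (by rwa [Equiv.apply_symm_apply])
  -- the anchor (first leaf) is fixed
  have hanch : e (toV N hN0 (N / 2 + 1)) = toV N hN0 (N / 2 + 1) := by
    have halab : lab (toV N hN0 (N / 2 + 1)) = N / 2 + 1 :=
      lab_toV N hN0 (by omega) (by omega)
    have hno : ∀ u : Fin N, N < 2 * lab u → ¬ Rel N π u (toV N hN0 (N / 2 + 1)) := by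
      intro u hu hedge
      have hu1 : 1 ≤ lab u := lab_pos u
      have huN : lab u ≤ N := lab_le u
      have hF := F_mem N π (by omega) (lab u)
      have hE : E N π (lab u) (lab (toV N hN0 (N / 2 + 1))) := hedge
      rw [halab] at hE
      rcases hE with ⟨g2, ge⟩ | ⟨g2, ge⟩ | ⟨gl, ge, geN⟩ | ⟨gA, ge⟩
      · omega
      · omega
      · omega
      · obtain ⟨gA1, gA2⟩ := gA; omega
    have hnoH : ∀ u : Fin N, N < 2 * lab u → ¬ Rel N π' u (e (toV N hN0 (N / 2 + 1))) := by
      intro u' hu' hedge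
      apply hno (e.symm u')
      · have := hleaf (e.symm u'); rw [Equiv.apply_symm_apply] at this; exact this.1 hu'
      · exact (hiso _ _).2 (by rwa [Equiv.apply_symm_apply])
    have := anchor_char N hN64 π' (e (toV N hN0 (N / 2 + 1)))
      ((hleaf _).2 (by rw [halab]; omega)) hnoH
    apply lab_inj
    rw [this, halab]
  -- the chain of leaves is fixed
  have chain : ∀ k : ℕ, ∀ j : ℕ, j = N / 2 + 1 + k → j ≤ N →
      e (toV N hN0 j) = toV N hN0 j := by
    intro k
    induction k with
    | zero => intro j hj _; rw [hj, Nat.add_zero]; exact hanch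
    | succ k ih =>
      intro j hj hjN
      have hprev : e (toV N hN0 (j - 1)) = toV N hN0 (j - 1) := ih (j - 1) (by omega) (by omega)
      have hlabp : lab (toV N hN0 (j - 1)) = j - 1 := lab_toV N hN0 (by omega) (by omega)
      have hlabj : lab (toV N hN0 j) = j := lab_toV N hN0 (by omega) (by omega)
      have hGedge : Rel N π (toV N hN0 (j - 1)) (toV N hN0 j) :=
        Or.inr (Or.inr (Or.inl ⟨by rw [hlabp]; omega, by rw [hlabp, hlabj]; omega,
          by rw [hlabp]; omega⟩))
      have hHedge : Rel N π' (toV N hN0 (j - 1)) (e (toV N hN0 j)) := by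
        have := (hiso _ _).1 hGedge
        rwa [hprev] at this
      have hwleaf : N < 2 * lab (e (toV N hN0 j)) := (hleaf _).2 (by rw [hlabj]; omega)
      have h2 : Ablk N (lab (toV N hN0 (j - 1))) → ¬ TL N π' (e (toV N hN0 j)) := by
        intro hA
        obtain ⟨hA1, hA2⟩ := hA
        rw [hlabp] at hA1 hA2
        apply hTL
        apply noTL N hN64 π (toV N hN0 j) (by rw [hlabj]; omega)
        rw [hlabj]; omega
      have := succ_u N hN64 π' (toV N hN0 (j - 1)) (e (toV N hN0 j))
        (by rw [hlabp]; omega) (by rw [hlabp]; omega) hHedge hwleaf h2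
      apply lab_inj
      rw [this, hlabp, hlabj]
      omega
  -- descending induction for internal vertices
  have desc : ∀ d : ℕ, ∀ v : Fin N, N - lab v ≤ d → e v = v := by
    intro d
    induction d with
    | zero =>
      intro v h
      have : lab v = N := by have := lab_le v; omega
      rw [← toV_lab N hN0 v]
      exact chain (lab v - (N / 2 + 1)) (lab v) (by omega) (lab_le v)
    | succ d ih =>
      intro v h
      by_cases hvl : N < 2 * lab v
      · rw [← toV_lab N hN0 v]
        exact chain (lab v - (N / 2 + 1)) (lab v) (by omega) (lab_le v)
      · have hv1 : 1 ≤ lab v := lab_pos v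
        have hvN : lab v ≤ N := lab_le v
        have hlc : lab (toV N hN0 (2 * lab v)) = 2 * lab v :=
          lab_toV N hN0 (by omega) (by omega)
        have hc : e (toV N hN0 (2 * lab v)) = toV N hN0 (2 * lab v) := by
          apply ih
          rw [hlc]; omega
        have h1 : Rel N π (toV N hN0 (2 * lab v)) v :=
          Or.inl ⟨by rw [hlc]; omega, by rw [hlc]; omega⟩
        have h2 : Rel N π v (toV N hN0 (2 * lab v)) :=
          Or.inr (Or.inl ⟨by rw [hlc]; omega, by rw [hlc]; omega⟩)
        have hH1 : Rel N π' (toV N hN0 (2 * lab v)) (e v) := by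
          have := (hiso _ _).1 h1; rwa [hc] at this
        have hH2 : Rel N π' (e v) (toV N hN0 (2 * lab v)) := by
          have := (hiso _ _).1 h2; rwa [hc] at this
        have hTr := (AP_iff N hN64 π' (toV N hN0 (2 * lab v)) (e v)).1 ⟨hH1, hH2⟩
        rcases hTr with ⟨g2, ge⟩ | ⟨g2, ge⟩
        · rw [hlc] at ge
          exact lab_inj (by omega : lab (e v) = lab v)
        · -- lab (e v) ≥ 4 * lab v > lab v : apply ih to (e v)
          rw [hlc] at ge
          have hev : N - lab (e v) ≤ d := by
            have h4 : 4 * lab v ≤ lab (e v) := by omega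
            omega
          have := ih (e v) hev
          exact e.injective this
  intro v
  exact desc (N - lab v) v le_rfl

theorem noniso (hN : 65536 ≤ N) (π π' : Equiv.Perm (Fin (N / 8)))
    (h : Rel N π ≠ Rel N π') : ¬ isoRel N (Rel N π) (Rel N π') := by
  rintro ⟨e, hiso⟩
  apply h
  funext u v
  apply propext
  rw [hiso u v, rigid N hN π π' e hiso u, rigid N hN π π' e hiso v]

theorem rel_inj (hN : 65536 ≤ N) :
    Function.Injective (fun π : Equiv.Perm (Fin (N / 8)) => Rel N π) := by
  intro π π' h
  have hN0 : 0 < N := by omega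
  have hK : 0 < N / 8 := by omega
  apply Equiv.ext
  intro i
  have hi8 : i.1 < N / 8 := i.2
  have hlaba : lab (toV N hN0 (N / 2 + 2 + i.1)) = N / 2 + 2 + i.1 :=
    lab_toV N hN0 (by omega) (by omega)
  have hFb := F_mem N π hK (N / 2 + 2 + i.1)
  have hlabb : lab (toV N hN0 (F N π (N / 2 + 2 + i.1))) = F N π (N / 2 + 2 + i.1) :=
    lab_toV N hN0 (by omega) (by omega)
  have hedge : Rel N π (toV N hN0 (N / 2 + 2 + i.1)) (toV N hN0 (F N π (N / 2 + 2 + i.1))) := by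
    refine Or.inr (Or.inr (Or.inr ⟨⟨?_, ?_⟩, ?_⟩)) <;> rw [hlaba]
    · omega
    · omega
    · rw [hlabb]
  have hh : Rel N π = Rel N π' := h
  rw [hh] at hedge
  have hedge' : E N π' (N / 2 + 2 + i.1) (F N π (N / 2 + 2 + i.1)) := by
    have : E N π' (lab (toV N hN0 (N / 2 + 2 + i.1)))
        (lab (toV N hN0 (F N π (N / 2 + 2 + i.1)))) := hedge
    rwa [hlaba, hlabb] at this
  have hFb' := F_mem N π' hK (N / 2 + 2 + i.1)
  rcases hedge' with ⟨g2, ge⟩ | ⟨g2, ge⟩ | ⟨gl, ge, geN⟩ | ⟨gA, ge⟩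
  · omega
  · omega
  · omega
  · -- F N π n = F N π' n gives π i = π' i
    have e1 := F_eq N π hK (n := N / 2 + 2 + i.1) i (by omega)
    have e2 := F_eq N π' hK (n := N / 2 + 2 + i.1) i (by omega)
    apply Fin.ext
    have hv1 : (π i).1 < N / 8 := (π i).2
    have hv2 : (π' i).1 < N / 8 := (π' i).2
    omega

theorem card_S (hN : 65536 ≤ N) :
    (Set.range (fun π : Equiv.Perm (Fin (N / 8)) => Rel N π)).ncard = Nat.factorial (N / 8) := by
  rw [← Nat.card_coe_set_eq, Nat.card_range_of_injective (rel_inj N hN),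
    Nat.card_eq_fintype_card, Fintype.card_perm, Fintype.card_fin]

theorem count_lb (hN : 65536 ≤ N) : N ^ (N / 32) ≤ Nat.factorial (N / 8) := by
  have hq17 : 17 ≤ N / 16 := by omega
  have h1 : N ≤ N / 16 * (N / 16) :=
    le_trans (by omega : N ≤ 17 * (N / 16)) (Nat.mul_le_mul_right _ hq17)
  have h2 : N ^ (N / 32) ≤ (N / 16 * (N / 16)) ^ (N / 32) := Nat.pow_le_pow_left h1 _
  have h3 : (N / 16 * (N / 16)) ^ (N / 32) = (N / 16) ^ (2 * (N / 32)) := by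
    rw [two_mul, pow_add, ← mul_pow]
  have h4 : (N / 16) ^ (2 * (N / 32)) ≤ (N / 16) ^ (N / 8 - (N / 16 - 1)) :=
    Nat.pow_le_pow_right (by omega) (by omega)
  have h5 := Nat.factorial_mul_pow_le_factorial (m := N / 16 - 1) (n := N / 8 - (N / 16 - 1))
  rw [show N / 16 - 1 + 1 = N / 16 by omega, show N / 16 - 1 + (N / 8 - (N / 16 - 1)) = N / 8 by
    omega] at h5
  have h6 : (N / 16) ^ (N / 8 - (N / 16 - 1)) ≤ Nat.factorial (N / 16 - 1) * (N / 16) ^ (N / 8 - (N / 16 - 1)) :=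
    Nat.le_mul_of_pos_left _ (Nat.factorial_pos _)
  omega

end S0

/-- There is a constant `C > 0` such that for all sufficiently large `N`, there are at
least `N ^ (C·N)` pairwise non-isomorphic strongly connected directed graphs on `N`
vertices with in- and out-degrees bounded by `δ ≥ 3` and diameter at most
`2·log₂ N + 1`. -/
theorem stmt0 (δ : ℕ) (hδ : 3 ≤ δ) :
    ∃ C : ℝ, 0 < C ∧ ∀ᶠ N : ℕ in atTop,
      ∃ S : Set (Fin N → Fin N → Prop),
        S.Finite ∧
        (∀ G ∈ S, ∀ u v : Fin N, Relation.ReflTransGen G u v) ∧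
        (∀ G ∈ S, ∀ v : Fin N, {w | G v w}.ncard ≤ δ ∧ {u | G u v}.ncard ≤ δ) ∧
        (∀ G ∈ S, ∀ u v : Fin N, within G (2 * Nat.log 2 N + 1) u v) ∧
        (∀ G ∈ S, ∀ H ∈ S, G ≠ H → ¬ isoRel N G H) ∧
        (N : ℝ) ^ (C * N) ≤ S.ncard := by
  refine ⟨1 / 64, by norm_num, ?_⟩
  rw [eventually_atTop]
  refine ⟨65536, fun N hN => ?_⟩
  have hN0 : 0 < N := by omega
  refine ⟨Set.range (fun π : Equiv.Perm (Fin (N / 8)) => S0.Rel N π),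
    Set.finite_range _, ?_, ?_, ?_, ?_, ?_⟩
  · rintro G ⟨π, rfl⟩ u v
    exact S0.conn N hN0 π u v
  · rintro G ⟨π, rfl⟩ v
    exact ⟨le_trans (S0.outdeg N (by omega) π v) hδ, le_trans (S0.indeg N (by omega) π v) hδ⟩
  · rintro G ⟨π, rfl⟩ u v
    exact S0.diam N hN0 π u v
  · rintro G ⟨π, rfl⟩ H ⟨π', rfl⟩ hne
    exact S0.noniso N hN π π' hne
  · rw [S0.card_S N hN]
    have hd : ((N ^ (N / 32) : ℕ) : ℝ) ≤ (Nat.factorial (N / 8) : ℝ) := by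
      exact_mod_cast S0.count_lb N hN
    refine le_trans ?_ hd
    have h1 : (1 : ℝ) ≤ (N : ℝ) := by exact_mod_cast (by omega : 1 ≤ N)
    have h2 : (1 / 64 : ℝ) * N ≤ ((N / 32 : ℕ) : ℝ) := by
      have : (N : ℝ) ≤ 64 * ((N / 32 : ℕ) : ℝ) := by
        exact_mod_cast (by omega : N ≤ 64 * (N / 32))
      linarith
    calc (N : ℝ) ^ ((1 / 64 : ℝ) * N) ≤ (N : ℝ) ^ (((N / 32 : ℕ) : ℝ)) :=
          Real.rpow_le_rpow_of_exponent_le h1 h2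
      _ = ((N ^ (N / 32) : ℕ) : ℝ) := by rw [Real.rpow_natCast, Nat.cast_pow]
end

section
/- For every constant δ ≥ 2 there exist strongly connected directed graphs on N vertices with all in- and out-degrees between 1 and δ in which the diameter D satisfies D = O(log N); for such graphs the DFS-based mapping time O(N·D) = O(N·log N) matches the Ω(N·log N) lower bound, so the algorithm is asymptotically optimal on this family. -/
open Filter

lemma within_reflTransGen {V : Type*} {G : V → V → Prop} :
    ∀ {n : ℕ} {u v : V}, within G n u v → Relation.ReflTransGen G u v := by
  intro n
  induction n with
  | zero => intro u v h; rcases h with rfl; rfl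
  | succ n ih =>
    intro u v h
    rcases h with rfl | ⟨w, hw, h⟩
    · rfl
    · exact Relation.ReflTransGen.head hw (ih h)

lemma ncard_le_two_of_subset_pair {α : Type*} (S : Set α) (a b : α) (h : S ⊆ {a, b}) :
    S.ncard ≤ 2 := by
  have hfin : ({a, b} : Set α).Finite := (Set.finite_singleton b).insert a
  have h1 : S.ncard ≤ ({a, b} : Set α).ncard := Set.ncard_le_ncard h hfin
  have h2 : ({a, b} : Set α).ncard ≤ 2 := by
    calc ({a, b} : Set α).ncard ≤ ({b} : Set α).ncard + 1 := Set.ncard_insert_le a {b}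
    _ = 2 := by rw [Set.ncard_singleton]
  omega

section deBruijn

variable {k : ℕ}

/-- The de Bruijn-style graph on `Fin (2^k)`. -/
def dbG (k : ℕ) (u v : Fin (2 ^ k)) : Prop :=
  (2 * u.val) % 2 ^ k = v.val ∨ (2 * u.val + 1) % 2 ^ k = v.val

lemma N_pos (k : ℕ) : 0 < 2 ^ k := pow_pos (by norm_num) k

lemma db_reach (k : ℕ) : ∀ (m t : ℕ), t < 2 ^ m → ∀ u v : Fin (2 ^ k),
    (2 ^ m * u.val + t) % 2 ^ k = v.val → within (dbG k) m u v := by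
  intro m
  induction m with
  | zero =>
    intro t ht u v h
    have ht0 : t = 0 := by omega
    subst ht0
    simp only [pow_zero, one_mul, Nat.add_zero] at h
    rw [Nat.mod_eq_of_lt u.isLt] at h
    show u = v
    exact Fin.ext h
  | succ m ih =>
    intro t ht u v h
    set b := t / 2 ^ m with hb
    have hpm : 0 < 2 ^ m := N_pos m
    have hble : b ≤ 1 := by
      have h2 : t < 2 ^ m * 2 := by rw [← pow_succ]; exact ht
      have := Nat.div_lt_of_lt_mul h2
      omega
    set w : Fin (2 ^ k) := ⟨(2 * u.val + b) % 2 ^ k, Nat.mod_lt _ (N_pos k)⟩ with hw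
    refine Or.inr ⟨w, ?_, ?_⟩
    · rcases Nat.le_one_iff_eq_zero_or_eq_one.mp hble with h0 | h1
      · left; rw [hw]; simp [h0]
      · right; rw [hw]; simp [h1]
    · apply ih (t % 2 ^ m) (Nat.mod_lt _ hpm) w v
      have key : (2 ^ m * ((2 * u.val + b) % 2 ^ k) + t % 2 ^ m) % 2 ^ k
          = (2 ^ m * (2 * u.val + b) + t % 2 ^ m) % 2 ^ k :=
        (((Nat.mod_modEq (2 * u.val + b) (2 ^ k)).mul_left (2 ^ m)).add_right (t % 2 ^ m))
      have expand : 2 ^ m * (2 * u.val + b) + t % 2 ^ m = 2 ^ (m + 1) * u.val + t := by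
        have hdm : 2 ^ m * (t / 2 ^ m) + t % 2 ^ m = t := Nat.div_add_mod t (2 ^ m)
        have : 2 ^ m * (2 * u.val + b) + t % 2 ^ m
            = 2 ^ m * 2 * u.val + (2 ^ m * b + t % 2 ^ m) := by ring
        rw [this, hb, hdm, ← pow_succ]
      show (2 ^ m * w.val + t % 2 ^ m) % 2 ^ k = v.val
      rw [hw]
      dsimp only
      rw [key, expand, h]

lemma db_within (k : ℕ) (u v : Fin (2 ^ k)) : within (dbG k) k u v := by
  apply db_reach k k v.val v.isLt u v
  rw [Nat.mul_add_mod, Nat.mod_eq_of_lt v.isLt]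

lemma db_out (k : ℕ) (u : Fin (2 ^ k)) :
    1 ≤ {w | dbG k u w}.ncard ∧ {w | dbG k u w}.ncard ≤ 2 := by
  have hN := N_pos k
  constructor
  · have hne : {w | dbG k u w}.Nonempty :=
      ⟨⟨(2 * u.val) % 2 ^ k, Nat.mod_lt _ hN⟩, Or.inl rfl⟩
    have := (Set.ncard_pos (Set.toFinite _)).mpr hne
    omega
  · apply ncard_le_two_of_subset_pair _ (⟨(2 * u.val) % 2 ^ k, Nat.mod_lt _ hN⟩ : Fin (2 ^ k))
      (⟨(2 * u.val + 1) % 2 ^ k, Nat.mod_lt _ hN⟩ : Fin (2 ^ k))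
    intro w hw
    rcases hw with h | h
    · left; exact Fin.ext h.symm
    · right; exact Fin.ext h.symm

lemma db_in (k : ℕ) (v : Fin (2 ^ k)) :
    1 ≤ {u | dbG k u v}.ncard ∧ {u | dbG k u v}.ncard ≤ 2 := by
  have hN := N_pos k
  have hv := v.isLt
  constructor
  · -- nonempty: u = v.val / 2
    have hlt : v.val / 2 < 2 ^ k := lt_of_le_of_lt (Nat.div_le_self _ _) hv
    have hne : {u | dbG k u v}.Nonempty := by
      refine ⟨⟨v.val / 2, hlt⟩, ?_⟩
      have hdm := Nat.div_add_mod v.val 2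
      have hm2 : v.val % 2 = 0 ∨ v.val % 2 = 1 := by omega
      rcases hm2 with h0 | h1
      · left
        show (2 * (v.val / 2)) % 2 ^ k = v.val
        have : 2 * (v.val / 2) = v.val := by omega
        rw [this, Nat.mod_eq_of_lt hv]
      · right
        show (2 * (v.val / 2) + 1) % 2 ^ k = v.val
        have : 2 * (v.val / 2) + 1 = v.val := by omega
        rw [this, Nat.mod_eq_of_lt hv]
    have := (Set.ncard_pos (Set.toFinite _)).mpr hne
    omega
  · have hlt1 : v.val / 2 < 2 ^ k := lt_of_le_of_lt (Nat.div_le_self _ _) hv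
    have hlt2 : (v.val + 2 ^ k) / 2 < 2 ^ k :=
      Nat.div_lt_of_lt_mul (by omega : v.val + 2 ^ k < 2 * 2 ^ k)
    apply ncard_le_two_of_subset_pair _ (⟨v.val / 2, hlt1⟩ : Fin (2 ^ k))
      (⟨(v.val + 2 ^ k) / 2, hlt2⟩ : Fin (2 ^ k))
    intro u hu
    have hmem : ∀ b : ℕ, b ≤ 1 → (2 * u.val + b) % 2 ^ k = v.val →
        u.val = v.val / 2 ∨ u.val = (v.val + 2 ^ k) / 2 := by
      intro b hb h
      have hu2 : u.val < 2 ^ k := u.isLt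
      have hq := Nat.div_add_mod (2 * u.val + b) (2 ^ k)
      have hqlt : (2 * u.val + b) / 2 ^ k < 2 :=
        Nat.div_lt_of_lt_mul (by omega : 2 * u.val + b < 2 ^ k * 2)
      rw [h] at hq
      obtain ⟨q, hqlt', hq'⟩ : ∃ q, q < 2 ∧ 2 ^ k * q + v.val = 2 * u.val + b :=
        ⟨_, hqlt, hq⟩
      interval_cases q
      · left; omega
      · right; omega
    rcases hu with h | h
    · rcases hmem 0 (by norm_num) (by simpa using h) with h' | h'
      · left; exact Fin.ext h'
      · right; exact Fin.ext h'
    · rcases hmem 1 (by norm_num) h with h' | h'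
      · left; exact Fin.ext h'
      · right; exact Fin.ext h'

end deBruijn

/-- For every constant `δ ≥ 2` there exist (for arbitrarily large `N`) strongly
connected directed graphs on `N` vertices with all in- and out-degrees between `1` and
`δ` whose diameter `D` is `O(log N)`; for such graphs the DFS-based mapping time
`O(N·D)` is `O(N·log N)`, matching the `Ω(N·log N)` lower bound. -/
theorem stmt17 (δ : ℕ) (hδ : 2 ≤ δ) :
    ∃ C : ℝ, 0 < C ∧ ∃ᶠ N : ℕ in atTop,
      ∃ (G : Fin N → Fin N → Prop) (D : ℕ),
        (∀ u v : Fin N, Relation.ReflTransGen G u v) ∧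
        (∀ v : Fin N,
          1 ≤ {w | G v w}.ncard ∧ {w | G v w}.ncard ≤ δ ∧
          1 ≤ {u | G u v}.ncard ∧ {u | G u v}.ncard ≤ δ) ∧
        (∀ u v : Fin N, within G D u v) ∧
        (D : ℝ) ≤ C * Real.log N ∧
        (N : ℝ) * (D : ℝ) ≤ C * ((N : ℝ) * Real.log N) := by
  refine ⟨2, by norm_num, ?_⟩
  rw [frequently_atTop]
  intro M
  set k := max 1 M with hkdef
  have hk : 1 ≤ k := le_max_left 1 M
  have hMk : M ≤ 2 ^ k := by
    calc M ≤ k := le_max_right 1 M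
    _ ≤ 2 ^ k := Nat.le_of_lt ((Nat.lt_two_pow_self (n := k)))
  refine ⟨2 ^ k, hMk, dbG k, k, ?_, ?_, db_within k, ?_, ?_⟩
  · intro u v
    exact within_reflTransGen (db_within k u v)
  · intro v
    obtain ⟨ho1, ho2⟩ := db_out k v
    obtain ⟨hi1, hi2⟩ := db_in k v
    exact ⟨ho1, le_trans ho2 hδ, hi1, le_trans hi2 hδ⟩
  · -- k ≤ 2 * log (2^k)
    have hlog : Real.log ((2 ^ k : ℕ) : ℝ) = k * Real.log 2 := by
      push_cast
      rw [Real.log_pow]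
    rw [hlog]
    have hl2 : (0.6931471803 : ℝ) < Real.log 2 := Real.log_two_gt_d9
    have hk1 : (1 : ℝ) ≤ (k : ℝ) := by exact_mod_cast hk
    nlinarith
  · have hD : (k : ℝ) ≤ 2 * Real.log ((2 ^ k : ℕ) : ℝ) := by
      have hlog : Real.log ((2 ^ k : ℕ) : ℝ) = k * Real.log 2 := by
        push_cast
        rw [Real.log_pow]
      rw [hlog]
      have hl2 : (0.6931471803 : ℝ) < Real.log 2 := Real.log_two_gt_d9
      have hk1 : (1 : ℝ) ≤ (k : ℝ) := by exact_mod_cast hk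
      nlinarith
    have hN0 : (0 : ℝ) ≤ ((2 ^ k : ℕ) : ℝ) := by positivity
    calc ((2 ^ k : ℕ) : ℝ) * (k : ℝ) ≤ ((2 ^ k : ℕ) : ℝ) * (2 * Real.log ((2 ^ k : ℕ) : ℝ)) :=
          mul_le_mul_of_nonneg_left hD hN0
    _ = 2 * (((2 ^ k : ℕ) : ℝ) * Real.log ((2 ^ k : ℕ) : ℝ)) := by ring
end
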